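/- Assume Γ is a distance-regular graph that is Q-polynomial with respect to the ordering θ_0 = k, θ_1, …, θ_D of its eigenvalues. Let C be a completely regular code with covering radius ρ and Spec*(C) = {θ_{i_1}, θ_{i_2}, …, θ_{i_ρ}} where i_1 < i_2 < ⋯ < i_ρ. Let u(θ_{i_1}) be the eigenvector with eigenvalue θ_{i_1} belonging to C. If u(θ_{i_1}) has ρ + 1 different entries, then i_j − i_{j−1} ≤ i_1 for all j ∈ {1, …, ρ} (with i_0 = 0). -/

import Mathlib

open Finset Matrix

variable {V : Type*}

/-- `G` is a distance-regular graph with valency `k`, diameter `D`,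
and intersection numbers `b i`, `c i`. -/
def IsDRG [Fintype V] (G : SimpleGraph V) [DecidableRel G.Adj]
    (k D : ℕ) (b c : ℕ → ℕ) : Prop :=
  G.Connected ∧ (∀ v, G.degree v = k) ∧
    (∀ x y : V, G.dist x y ≤ D) ∧ (∃ x y : V, G.dist x y = D) ∧
    ∀ i ≤ D, ∀ x y : V, G.dist x y = i →
      ((Finset.univ.filter fun z => G.Adj y z ∧ G.dist x z = i - 1).card = c i ∧
       (Finset.univ.filter fun z => G.Adj y z ∧ G.dist x z = i + 1).card = b i)

/-- the distance from a vertex `v` to the code `C` -/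
noncomputable def codeDist (G : SimpleGraph V) (C : Finset V) (v : V) : ℕ :=
  sInf {n | ∃ y ∈ C, G.dist v y = n}

/-- the characteristic vector of a code -/
def charVec [DecidableEq V] (C : Finset V) : V → ℂ :=
  fun v => if v ∈ C then 1 else 0

/-- the characteristic vector of the `i`-th cell `C_i` of the distance partition -/
noncomputable def cellVec (G : SimpleGraph V) (C : Finset V) (i : ℕ) : V → ℂ :=
  fun v => if codeDist G C v = i then 1 else 0

/-- the `i`-th cell `C_i` of the distance partition, as a finset -/
noncomputable def cellFinset [Fintype V] (G : SimpleGraph V) (C : Finset V) (i : ℕ) : Finset V :=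
  Finset.univ.filter fun v => codeDist G C v = i

/-- the number of neighbours of `v` lying in the `j`-th cell `C_j` -/
noncomputable def nbrsInCell [Fintype V] (G : SimpleGraph V) [DecidableRel G.Adj]
    (C : Finset V) (j : ℕ) (v : V) : ℕ :=
  (Finset.univ.filter fun z => G.Adj v z ∧ codeDist G C z = j).card

/-- `C` is a completely regular code with covering radius `ρ` and
intersection numbers `γ i, α i, β i`. -/
def IsCRC [Fintype V] (G : SimpleGraph V) [DecidableRel G.Adj]
    (C : Finset V) (ρ : ℕ) (γ α β : ℕ → ℕ) : Prop :=
  C.Nonempty ∧ (∀ v, codeDist G C v ≤ ρ) ∧ (∃ v, codeDist G C v = ρ) ∧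
    (∀ i, 1 ≤ i → i ≤ ρ → ∀ v, codeDist G C v = i → nbrsInCell G C (i - 1) v = γ i) ∧
    (∀ i ≤ ρ, ∀ v, codeDist G C v = i → nbrsInCell G C i v = α i) ∧
    (∀ i ≤ ρ, ∀ v, codeDist G C v = i → nbrsInCell G C (i + 1) v = β i)

/-- the outer distribution module `𝔸x` of the code `C`, where `𝔸` is the
Bose-Mesner algebra (the algebra generated by the adjacency matrix) -/
noncomputable def outerModule [Fintype V] [DecidableEq V] (G : SimpleGraph V)
    [DecidableRel G.Adj] (C : Finset V) : Submodule ℂ (V → ℂ) :=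
  Submodule.span ℂ {w | ∃ M ∈ Algebra.adjoin ℂ {G.adjMatrix ℂ}, w = M *ᵥ charVec C}

/-- the tridiagonal quotient matrix `U` of a completely regular code -/
def quotientMatrix (F : Type*) [Semiring F] (γ α β : ℕ → ℕ) (ρ : ℕ) :
    Matrix (Fin (ρ + 1)) (Fin (ρ + 1)) F :=
  Matrix.of fun i j =>
    if (i : ℕ) = (j : ℕ) + 1 then (γ (i : ℕ) : F)
    else if (i : ℕ) = (j : ℕ) then (α (i : ℕ) : F)
    else if (j : ℕ) = (i : ℕ) + 1 then (β (i : ℕ) : F)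
    else 0

/-- `θ` lists the distinct eigenvalues of `A` and `E j` is the orthogonal
projection onto the eigenspace of `θ j` (the primitive idempotents). -/
def PrimIdem [Fintype V] [DecidableEq V] (A : Matrix V V ℂ) (D : ℕ)
    (θ : Fin (D + 1) → ℝ) (E : Fin (D + 1) → Matrix V V ℂ) : Prop :=
  Function.Injective θ ∧ (∀ j, E j * E j = E j) ∧ (∀ j, (E j)ᴴ = E j) ∧
    (∀ j, A * E j = (θ j : ℂ) • E j) ∧ (∑ j, E j = 1) ∧ (∀ j, E j ≠ 0)

/-- `q` are the Krein parameters of the primitive idempotents `E`. -/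
def KreinRel [Fintype V] (D : ℕ) (E : Fin (D + 1) → Matrix V V ℂ)
    (q : Fin (D + 1) → Fin (D + 1) → Fin (D + 1) → ℝ) : Prop :=
  ∀ i j, Matrix.hadamard (E i) (E j) = (Fintype.card V : ℂ)⁻¹ • ∑ l, (q i j l : ℂ) • E l

/-- the Krein parameters satisfy the `Q`-polynomial condition with respect to the
given ordering of the primitive idempotents -/
def QPolyKrein (D : ℕ) (q : Fin (D + 1) → Fin (D + 1) → Fin (D + 1) → ℝ) : Prop :=
  ∀ i j l : Fin (D + 1),
    (¬(((i : ℤ) - (j : ℤ)).natAbs ≤ (l : ℕ) ∧ (l : ℕ) ≤ (i : ℕ) + (j : ℕ)) → q i j l = 0) ∧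
    (((l : ℕ) = ((i : ℤ) - (j : ℤ)).natAbs ∨ (l : ℕ) = (i : ℕ) + (j : ℕ)) → q i j l ≠ 0)

/-- a matrix is irreducible tridiagonal if all entries at distance more than one from
the diagonal vanish and all sub- and super-diagonal entries are nonzero -/
def IrredTridiag {n : ℕ} {F : Type*} [Zero F] (M : Matrix (Fin n) (Fin n) F) : Prop :=
  (∀ i j : Fin n, 1 < (((i : ℕ) : ℤ) - ((j : ℕ) : ℤ)).natAbs → M i j = 0) ∧
  (∀ i j : Fin n, (((i : ℕ) : ℤ) - ((j : ℕ) : ℤ)).natAbs = 1 → M i j ≠ 0)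

/-- `C` is a Leonard completely regular code with respect to the (nontrivial)
eigenvalue `θ t`: for some ordering `σ` of the basis `ℬ = {E_j x ≠ 0}` of the outer
distribution module, the matrix representing `y ↦ (E t x) ∘ y` is irreducible
tridiagonal. -/
def IsLeonardWrt [Fintype V] [DecidableEq V] (D ρ : ℕ)
    (E : Fin (D + 1) → Matrix V V ℂ) (C : Finset V) (t : Fin (D + 1)) : Prop :=
  E t *ᵥ charVec C ≠ 0 ∧
    ∃ σ : Fin (ρ + 1) → Fin (D + 1), Function.Injective σ ∧
      (∀ j : Fin (D + 1), E j *ᵥ charVec C ≠ 0 ↔ j ∈ Set.range σ) ∧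
      ∃ M : Matrix (Fin (ρ + 1)) (Fin (ρ + 1)) ℂ, IrredTridiag M ∧
        ∀ j, (E t *ᵥ charVec C) * (E (σ j) *ᵥ charVec C) =
          ∑ l, M l j • (E (σ l) *ᵥ charVec C)

/-- `C` is a Leonard completely regular code: it is Leonard with respect to some
nontrivial eigenvalue. -/
def IsLeonard [Fintype V] [DecidableEq V] (D ρ : ℕ)
    (E : Fin (D + 1) → Matrix V V ℂ) (C : Finset V) : Prop :=
  ∃ t : Fin (D + 1), t ≠ 0 ∧ IsLeonardWrt D ρ E C t

/-- `C` is a `Q`-polynomial completely regular code with respect to the eigenvalue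
`θ t`: there is an ordering `Spec C = {θ 0, θ (σ 1), …, θ (σ ρ)}` with `σ 1 = t`
such that the entrywise `p`-th power of `u = E t x` lies in
`V_{σ 0} + ⋯ + V_{σ p}` for all `0 ≤ p ≤ ρ`. -/
def IsQPolyCodeWrt [Fintype V] [DecidableEq V] (G : SimpleGraph V) [DecidableRel G.Adj]
    (D ρ : ℕ) (θ : Fin (D + 1) → ℝ) (E : Fin (D + 1) → Matrix V V ℂ)
    (γ α β : ℕ → ℕ) (C : Finset V) (t : Fin (D + 1)) : Prop :=
  ∃ σ : Fin (ρ + 1) → Fin (D + 1), σ 0 = 0 ∧ Function.Injective σ ∧ σ 1 = t ∧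
    spectrum ℂ (quotientMatrix ℂ γ α β ρ) = Set.range (fun j => (θ (σ j) : ℂ)) ∧
    ∀ p : Fin (ρ + 1), (fun v => (E t *ᵥ charVec C) v ^ (p : ℕ)) ∈
      ⨆ (j : Fin (ρ + 1)) (_ : j ≤ p),
        Module.End.eigenspace (Matrix.mulVecLin (G.adjMatrix ℂ)) ((θ (σ j) : ℂ))

/-- `C` is a `Q`-polynomial completely regular code. -/
def IsQPolyCode [Fintype V] [DecidableEq V] (G : SimpleGraph V) [DecidableRel G.Adj]
    (D ρ : ℕ) (θ : Fin (D + 1) → ℝ) (E : Fin (D + 1) → Matrix V V ℂ)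
    (γ α β : ℕ → ℕ) (C : Finset V) : Prop :=
  ∃ t : Fin (D + 1), IsQPolyCodeWrt G D ρ θ E γ α β C t

/-- a translation graph on an abelian group: adjacency is invariant under translation -/
def IsTranslationGraph {X : Type*} [AddCommGroup X] (G : SimpleGraph X) : Prop :=
  ∀ x y z : X, G.Adj x y → G.Adj (x + z) (y + z)

/-- the coset graph of an additive code `C`: cosets `C'` and `C''` are adjacent if
`Γ` has an edge with one end in `C'` and the other in `C''` -/
def cosetGraph {X : Type*} [AddCommGroup X] (G : SimpleGraph X) (C : AddSubgroup X) :
    SimpleGraph (X ⧸ C) where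
  Adj a b := a ≠ b ∧ ∃ x y : X,
    QuotientAddGroup.mk x = a ∧ QuotientAddGroup.mk y = b ∧ G.Adj x y
  symm := ⟨fun a b ⟨hne, x, y, hx, hy, h⟩ => ⟨hne.symm, y, x, hy, hx, h.symm⟩⟩
  loopless := ⟨fun a ⟨hne, _⟩ => hne rfl⟩

/-- `G` is a `Q`-polynomial distance-regular graph: it is distance-regular and
admits an ordering of its primitive idempotents whose Krein parameters satisfy
the `Q`-polynomial condition -/
def IsQPolyDRG {W : Type*} [Fintype W] [DecidableEq W]
    (G : SimpleGraph W) [DecidableRel G.Adj] : Prop :=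
  ∃ (k D : ℕ) (b c : ℕ → ℕ), IsDRG G k D b c ∧
    ∃ (θ : Fin (D + 1) → ℝ) (E : Fin (D + 1) → Matrix W W ℂ)
      (q : Fin (D + 1) → Fin (D + 1) → Fin (D + 1) → ℝ),
      θ 0 = k ∧ PrimIdem (G.adjMatrix ℂ) D θ E ∧ KreinRel D E q ∧ QPolyKrein D q


/-!
Let `x = ∑ᵢ uᵢ xᵢ` be the eigenvector of `C` for `θ_{i₁}`, and suppose `i_{j+1} - i_j > i₁`.
Multiplying entrywise by `x ∈ V_{i₁}` raises the `Q`-degree by at most `i₁` (the Krein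
condition), and the outer distribution module has no component in `V_l` for `i_j < l < i_{j+1}`;
by induction every entrywise power `x^p` lies in `V_0 + ⋯ + V_{i_j}`. Since the `uᵢ` are distinct,
a Vandermonde argument shows that the powers `x^0, …, x^ρ` span the outer distribution module,
which however contains the eigenvector of `C` for `θ_{i_{j+1}}`.
-/

section LinearAlgebra
variable {K ι : Type*} [Field K] [Fintype ι] [DecidableEq ι]

lemma Matrix.exists_mulVec_eq_smul_of_mem_spectrum {U : Matrix ι ι K} {μ : K}
    (h : μ ∈ spectrum K U) : ∃ v ≠ 0, U *ᵥ v = μ • v := by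
  rw [← Matrix.spectrum_toLin', ← Module.End.hasEigenvalue_iff_mem_spectrum] at h
  obtain ⟨v, hv, hv0⟩ := h.exists_hasEigenvector
  exact ⟨v, hv0, by simpa [Module.End.mem_eigenspace_iff] using hv⟩

lemma Matrix.exists_eigenvectors_span_eq_top {U : Matrix ι ι K} {μ : ι → K}
    (hμ : Function.Injective μ) (hspec : ∀ r, μ r ∈ spectrum K U) :
    ∃ v : ι → ι → K, (∀ r, U *ᵥ v r = μ r • v r) ∧ Submodule.span K (Set.range v) = ⊤ := by
  choose v hv0 hv using fun r => exists_mulVec_eq_smul_of_mem_spectrum (hspec r)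
  refine ⟨v, hv, LinearIndependent.span_eq_top_of_card_eq_finrank' ?_ (by simp)⟩
  exact Module.End.eigenvectors_linearIndependent' (Matrix.toLin' U) μ hμ v fun r =>
    ⟨by simpa [Module.End.mem_eigenspace_iff] using hv r, hv0 r⟩

lemma span_range_pow_eq_top {n : ℕ} {u : Fin n → K} (hu : Function.Injective u) :
    Submodule.span K (Set.range fun p : Fin n => u ^ (p : ℕ)) = ⊤ := by
  have hli : LinearIndependent K (vandermonde u).col :=
    linearIndependent_cols_iff_isUnit.2 <|
      (isUnit_iff_isUnit_det _).2 (det_vandermonde_ne_zero_iff.2 hu).isUnit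
  exact hli.span_eq_top_of_card_eq_finrank' (by simp)

end LinearAlgebra

lemma StrictMono.notMem_range_of_lt_of_lt_succ {n : ℕ} {β : Type*} [LinearOrder β]
    {f : Fin (n + 1) → β} (hf : StrictMono f) {j : Fin n} {b : β} (h₁ : f j.castSucc < b)
    (h₂ : b < f j.succ) : b ∉ Set.range f := by
  rintro ⟨r, rfl⟩
  rcases le_or_gt r j.castSucc with h | h
  · exact (hf.monotone h).not_gt h₁
  · exact (hf.monotone (Fin.castSucc_lt_iff_succ_le.1 h)).not_gt h₂

section Schur

lemma Matrix.hadamard_mul_conjTranspose_eq_sum_vecMulVec {m n : Type*} [Fintype n]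
    (P Q : Matrix m n ℂ) :
    (P * Pᴴ) ⊙ (Q * Qᴴ) =
      ∑ a, ∑ b, vecMulVec (fun x => P x a * Q x b) (star fun x => P x a * Q x b) := by
  ext x y
  simp only [hadamard_apply, mul_apply, conjTranspose_apply, sum_apply, vecMulVec_apply,
    Pi.star_apply, star_mul', sum_mul_sum]
  exact sum_congr rfl fun a _ => sum_congr rfl fun b _ => by ring

open scoped ComplexOrder in
lemma Matrix.mulVec_eq_zero_of_trace_mul_sum_vecMulVec_eq_zero {n ι : Type*} [Fintype n]
    [Fintype ι] {L : Matrix n n ℂ} (hH : Lᴴ = L) (hI : L * L = L) (w : ι → n → ℂ)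
    (h : trace (L * ∑ s, vecMulVec (w s) (star (w s))) = 0) (s : ι) : L *ᵥ w s = 0 := by
  have hterm : ∀ s, trace (L * vecMulVec (w s) (star (w s))) =
      star (L *ᵥ w s) ⬝ᵥ (L *ᵥ w s) := fun s => by
    rw [mul_vecMulVec, trace_vecMulVec, dotProduct_comm, star_mulVec, ← dotProduct_mulVec,
      mulVec_mulVec, hH, hI]
  simp only [mul_sum, trace_sum, hterm] at h
  exact dotProduct_star_self_eq_zero.1 <|
    (sum_eq_zero_iff_of_nonneg fun s _ => dotProduct_star_self_nonneg _).1 h s (mem_univ s)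

end Schur

/-- The common kernel of the `E l` with `l > n`, which is `V_0 + ⋯ + V_n` when `∑ l, E l = 1`. -/
def eigenspacesUpTo [Fintype V] {D : ℕ} (E : Fin (D + 1) → Matrix V V ℂ) (n : ℕ) :
    Submodule ℂ (V → ℂ) :=
  ⨅ (l : Fin (D + 1)) (_ : n < (l : ℕ)), LinearMap.ker (E l).mulVecLin

lemma mem_eigenspacesUpTo [Fintype V] {D : ℕ} {E : Fin (D + 1) → Matrix V V ℂ} {n : ℕ}
    {w : V → ℂ} : w ∈ eigenspacesUpTo E n ↔ ∀ l : Fin (D + 1), n < l → E l *ᵥ w = 0 := by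
  simp [eigenspacesUpTo]

namespace PrimIdem
variable [Fintype V] [DecidableEq V] {A : Matrix V V ℂ} {D : ℕ} {θ : Fin (D + 1) → ℝ}
  {E : Fin (D + 1) → Matrix V V ℂ}

lemma mul_adj (hPI : PrimIdem A D θ E) (hA : Aᴴ = A) (j : Fin (D + 1)) :
    E j * A = (θ j : ℂ) • E j := by
  have h := congrArg conjTranspose (hPI.2.2.2.1 j)
  rwa [conjTranspose_mul, hA, conjTranspose_smul, hPI.2.2.1, Complex.star_def,
    Complex.conj_ofReal] at h

lemma mulVec_eq_zero_of_mulVec_eq_smul (hPI : PrimIdem A D θ E) (hA : Aᴴ = A)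
    {w : V → ℂ} {μ : ℂ} (hw : A *ᵥ w = μ • w) {l : Fin (D + 1)} (hl : (θ l : ℂ) ≠ μ) :
    E l *ᵥ w = 0 := by
  have h : ((θ l : ℂ) - μ) • (E l *ᵥ w) = 0 := by
    rw [sub_smul, ← smul_mulVec, ← hPI.mul_adj hA, ← mulVec_mulVec, hw, mulVec_smul, sub_self]
  exact (smul_eq_zero.1 h).resolve_left (sub_ne_zero.2 hl)

lemma sum_mulVec (hPI : PrimIdem A D θ E) (w : V → ℂ) : ∑ l, E l *ᵥ w = w := by
  rw [← Matrix.sum_mulVec, hPI.2.2.2.2.1, one_mulVec]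

lemma mulVec_eq_self_of_mulVec_eq_smul (hPI : PrimIdem A D θ E) (hA : Aᴴ = A)
    {w : V → ℂ} {t : Fin (D + 1)} (hw : A *ᵥ w = (θ t : ℂ) • w) : E t *ᵥ w = w := by
  conv_rhs => rw [← hPI.sum_mulVec w]
  rw [Fintype.sum_eq_single t fun l hl =>
    hPI.mulVec_eq_zero_of_mulVec_eq_smul hA hw (Complex.ofReal_injective.ne (hPI.1.ne hl))]

lemma mul_eq_zero (hPI : PrimIdem A D θ E) (hA : Aᴴ = A) {l m : Fin (D + 1)} (hlm : l ≠ m) :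
    E l * E m = 0 := by
  refine ext_iff_mulVec.2 fun v => ?_
  rw [← mulVec_mulVec, zero_mulVec]
  refine hPI.mulVec_eq_zero_of_mulVec_eq_smul hA (μ := θ m) ?_
    (Complex.ofReal_injective.ne (hPI.1.ne hlm))
  rw [mulVec_mulVec, hPI.2.2.2.1, smul_mulVec]

lemma trace_mul_hadamard_eq_zero (hPI : PrimIdem A D θ E) (hA : Aᴴ = A)
    {q : Fin (D + 1) → Fin (D + 1) → Fin (D + 1) → ℝ} (hq : KreinRel D E q)
    {i m l : Fin (D + 1)} (h : q i m l = 0) : trace (E l * (E i ⊙ E m)) = 0 := by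
  rw [hq, Matrix.mul_smul, mul_sum, Fintype.sum_eq_single l fun l' hl' => by
    rw [Matrix.mul_smul, hPI.mul_eq_zero hA hl'.symm, smul_zero]]
  simp [h]

/-- The vanishing of the Krein parameter `q_{im}^l` in vector form: `E_l (V_i ∘ V_m) = 0`.
The Schur product `E_i ∘ E_m` is a sum of `w wᴴ`, so a zero trace against `E_l` kills each `w`. -/
lemma mulVec_mul_mulVec_eq_zero (hPI : PrimIdem A D θ E) {i m l : Fin (D + 1)}
    (h : trace (E l * (E i ⊙ E m)) = 0) (y z : V → ℂ) :
    E l *ᵥ ((E i *ᵥ y) * (E m *ᵥ z)) = 0 := by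
  have hfac : ∀ j, E j = E j * (E j)ᴴ := fun j => by rw [hPI.2.2.1, hPI.2.1]
  set w : V × V → V → ℂ := fun ab x => E i x ab.1 * E m x ab.2
  have hsum : E i ⊙ E m = ∑ ab, vecMulVec (w ab) (star (w ab)) := by
    rw [hfac i, hfac m, hadamard_mul_conjTranspose_eq_sum_vecMulVec, ← Fintype.sum_prod_type']
  have hexp : (E i *ᵥ y) * (E m *ᵥ z) = ∑ ab, (y ab.1 * z ab.2) • w ab := by
    ext x
    simp only [Pi.mul_apply, mulVec, dotProduct, sum_mul_sum, ← Fintype.sum_prod_type',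
      Finset.sum_apply, Pi.smul_apply, smul_eq_mul, w]
    exact sum_congr rfl fun ab _ => by ring
  rw [hsum] at h
  simp [hexp, mulVec_sum, mulVec_smul,
    mulVec_eq_zero_of_trace_mul_sum_vecMulVec_eq_zero (hPI.2.2.1 l) (hPI.2.1 l) w h]

variable {q : Fin (D + 1) → Fin (D + 1) → Fin (D + 1) → ℝ}

lemma mul_mem_eigenspacesUpTo (hPI : PrimIdem A D θ E) (hA : Aᴴ = A) (hq : KreinRel D E q)
    (hQ : QPolyKrein D q) {t : Fin (D + 1)} {x y : V → ℂ} (hx : E t *ᵥ x = x) {n : ℕ}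
    (hy : y ∈ eigenspacesUpTo E n) : x * y ∈ eigenspacesUpTo E (n + t) := by
  rw [mem_eigenspacesUpTo] at hy ⊢
  intro l hl
  rw [← hPI.sum_mulVec y, mul_sum, mulVec_sum]
  refine sum_eq_zero fun m _ => ?_
  rcases lt_or_ge n m with hm | hm
  · rw [hy m hm, mul_zero, mulVec_zero]
  · rw [← hx]
    exact hPI.mulVec_mul_mulVec_eq_zero
      (hPI.trace_mul_hadamard_eq_zero hA hq ((hQ t m l).1 fun h => by omega)) x y

lemma pow_mem_eigenspacesUpTo (hPI : PrimIdem A D θ E) (hA : Aᴴ = A) (hq : KreinRel D E q)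
    (hQ : QPolyKrein D q) {t : Fin (D + 1)} {x : V → ℂ} (hx : E t *ᵥ x = x) {n : ℕ}
    (hone : 1 ∈ eigenspacesUpTo E n)
    (hgap : ∀ p : ℕ, ∀ l : Fin (D + 1), n < l → (l : ℕ) ≤ n + t → E l *ᵥ x ^ p = 0)
    (p : ℕ) : x ^ p ∈ eigenspacesUpTo E n := by
  induction p with
  | zero => rwa [pow_zero]
  | succ p ih =>
    have h := mem_eigenspacesUpTo.1 (hPI.mul_mem_eigenspacesUpTo hA hq hQ hx ih)
    refine mem_eigenspacesUpTo.2 fun l hl => ?_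
    rcases le_or_gt (l : ℕ) (n + t) with hle | hlt
    · exact hgap _ l hl hle
    · rw [pow_succ']
      exact h l hlt

end PrimIdem

section CodeDistance
variable {G : SimpleGraph V} {C : Finset V}

lemma exists_mem_dist_eq_codeDist (hC : C.Nonempty) (v : V) :
    ∃ y ∈ C, G.dist v y = codeDist G C v :=
  Nat.sInf_mem (s := {n | ∃ y ∈ C, G.dist v y = n}) (hC.elim fun y hy => ⟨_, y, hy, rfl⟩)

lemma codeDist_le_dist {y : V} (hy : y ∈ C) (v : V) : codeDist G C v ≤ G.dist v y :=
  Nat.sInf_le ⟨y, hy, rfl⟩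

lemma codeDist_le_codeDist_add_one (hconn : G.Connected) (hC : C.Nonempty) {v w : V}
    (h : G.Adj v w) : codeDist G C v ≤ codeDist G C w + 1 := by
  obtain ⟨y, hy, hwy⟩ := exists_mem_dist_eq_codeDist (G := G) hC w
  have htri : G.dist v y ≤ G.dist v w + G.dist w y := hconn.dist_triangle
  have := codeDist_le_dist (G := G) hy v
  rw [SimpleGraph.dist_eq_one_iff_adj.2 h] at htri
  omega

lemma exists_adj_codeDist_eq (hconn : G.Connected) (hC : C.Nonempty) {v : V} {i : ℕ}
    (hv : codeDist G C v = i + 1) : ∃ w, G.Adj v w ∧ codeDist G C w = i := by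
  obtain ⟨y, hy, hvy⟩ := exists_mem_dist_eq_codeDist (G := G) hC v
  obtain ⟨p, hp⟩ := hconn.exists_walk_length_eq_dist v y
  cases p with
  | nil => simp_all
  | @cons _ w _ hadj p =>
    have hwy : G.dist w y ≤ i := by
      have := SimpleGraph.dist_le p
      simp only [SimpleGraph.Walk.length_cons] at hp
      omega
    have h1 := codeDist_le_dist (G := G) hy w
    have h2 := codeDist_le_codeDist_add_one hconn hC hadj
    exact ⟨w, hadj, by omega⟩

lemma exists_codeDist_eq_of_le (hconn : G.Connected) (hC : C.Nonempty) {v : V} {i : ℕ}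
    (hi : i ≤ codeDist G C v) : ∃ w, codeDist G C w = i := by
  induction hi using Nat.decreasingInduction with
  | self => exact ⟨v, rfl⟩
  | of_succ k _ ih =>
    obtain ⟨w, hw⟩ := ih
    obtain ⟨z, -, hz⟩ := exists_adj_codeDist_eq hconn hC hw
    exact ⟨z, hz⟩

end CodeDistance

/-- The cell of the distance partition containing `v`; the clamping at `ρ` is vacuous when `ρ` is
the covering radius. -/
noncomputable def cellIndex (G : SimpleGraph V) (C : Finset V) (ρ : ℕ) (v : V) : Fin (ρ + 1) :=
  Fin.clamp (codeDist G C v) ρ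

/-- `w ↦ ∑ i, w i • x_i`, where `x_i` is the characteristic vector of the cell `C_i`. -/
noncomputable def cellLift (G : SimpleGraph V) (C : Finset V) (ρ : ℕ) (R : Type*) [Semiring R] :
    (Fin (ρ + 1) → R) →ₗ[R] V → R :=
  LinearMap.funLeft R R (cellIndex G C ρ)

lemma cellLift_pow (G : SimpleGraph V) (C : Finset V) (ρ : ℕ) {R : Type*} [Semiring R]
    (w : Fin (ρ + 1) → R) (p : ℕ) : cellLift G C ρ R (w ^ p) = cellLift G C ρ R w ^ p :=
  rfl

lemma quotientMatrix_map {R S : Type*} [Semiring R] [Semiring S] (f : R →+* S) (γ α β : ℕ → ℕ)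
    (ρ : ℕ) : (quotientMatrix R γ α β ρ).map f = quotientMatrix S γ α β ρ := by
  ext i j
  simp only [quotientMatrix, map_apply, of_apply]
  split_ifs <;> simp

lemma quotientMatrix_mulVec_map {R S : Type*} [Semiring R] [Semiring S] (f : R →+* S)
    {γ α β : ℕ → ℕ} {ρ : ℕ} {u : Fin (ρ + 1) → R} {μ : R}
    (hu : quotientMatrix R γ α β ρ *ᵥ u = μ • u) :
    quotientMatrix S γ α β ρ *ᵥ (f ∘ u) = f μ • (f ∘ u) := by
  ext i
  rw [← quotientMatrix_map f, ← RingHom.map_mulVec, hu]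
  simp

section CompletelyRegular
variable [Fintype V] {G : SimpleGraph V} [DecidableRel G.Adj] {C : Finset V} {ρ : ℕ}
  {γ α β : ℕ → ℕ}

lemma IsCRC.cellIndex_val (hC : IsCRC G C ρ γ α β) (v : V) :
    (cellIndex G C ρ v : ℕ) = codeDist G C v :=
  min_eq_left (hC.2.1 v)

lemma IsCRC.cellIndex_surjective (hC : IsCRC G C ρ γ α β) (hconn : G.Connected) :
    Function.Surjective (cellIndex G C ρ) := by
  intro i
  obtain ⟨v, hv⟩ := hC.2.2.1
  obtain ⟨w, hw⟩ := exists_codeDist_eq_of_le hconn hC.1 (v := v) (i := i) (by omega)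
  exact ⟨w, Fin.ext (by rw [hC.cellIndex_val, hw])⟩

lemma nbrsInCell_eq_zero (hconn : G.Connected) (hC : C.Nonempty) {j : ℕ} {v : V}
    (h : codeDist G C v + 1 < j ∨ j + 1 < codeDist G C v) : nbrsInCell G C j v = 0 := by
  refine card_eq_zero.2 (filter_eq_empty_iff.2 fun w _ ⟨hadj, hw⟩ => ?_)
  have := codeDist_le_codeDist_add_one hconn hC hadj
  have := codeDist_le_codeDist_add_one hconn hC hadj.symm
  omega

lemma IsCRC.nbrsInCell_eq_quotientMatrix (hC : IsCRC G C ρ γ α β) (hconn : G.Connected)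
    (R : Type*) [Semiring R] (v : V) (m : Fin (ρ + 1)) :
    (nbrsInCell G C m v : R) = quotientMatrix R γ α β ρ (cellIndex G C ρ v) m := by
  have hv := hC.2.1 v
  simp only [quotientMatrix, of_apply, hC.cellIndex_val]
  obtain ⟨hne, -, -, hγ, hα, hβ⟩ := hC
  split_ifs with h1 h2 h3
  · rw [← hγ _ (by omega) hv v rfl, h1, Nat.add_sub_cancel]
  · rw [← hα _ hv v rfl, h2]
  · rw [← hβ _ hv v rfl, h3]
  · rw [nbrsInCell_eq_zero hconn hne (by omega), Nat.cast_zero]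

lemma IsCRC.adjMatrix_mulVec_cellLift (hC : IsCRC G C ρ γ α β) (hconn : G.Connected)
    {R : Type*} [Semiring R] (w : Fin (ρ + 1) → R) :
    G.adjMatrix R *ᵥ cellLift G C ρ R w = cellLift G C ρ R (quotientMatrix R γ α β ρ *ᵥ w) := by
  ext v
  simp only [cellLift, LinearMap.funLeft_apply, mulVec, dotProduct]
  rw [← sum_fiberwise univ (cellIndex G C ρ)]
  refine sum_congr rfl fun m _ => ?_
  rw [← hC.nbrsInCell_eq_quotientMatrix hconn R v m, nbrsInCell, ← sum_boole, sum_mul,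
    sum_filter]
  refine sum_congr rfl fun z _ => ?_
  have hz : cellIndex G C ρ z = m ↔ codeDist G C z = m := by rw [Fin.ext_iff, hC.cellIndex_val]
  by_cases h : cellIndex G C ρ z = m
  · simp [h, hz.1 h, SimpleGraph.adjMatrix_apply]
  · simp [h, mt hz.2 h]

lemma IsCRC.exists_cellLift_eigenvector (hC : IsCRC G C ρ γ α β) (hconn : G.Connected)
    {μ : ℂ} (hμ : μ ∈ spectrum ℂ (quotientMatrix ℂ γ α β ρ)) :
    ∃ w, cellLift G C ρ ℂ w ≠ 0 ∧
      G.adjMatrix ℂ *ᵥ cellLift G C ρ ℂ w = μ • cellLift G C ρ ℂ w := by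
  obtain ⟨w, hw0, hw⟩ := exists_mulVec_eq_smul_of_mem_spectrum hμ
  refine ⟨w, fun h => hw0 ?_, by rw [hC.adjMatrix_mulVec_cellLift hconn, hw, map_smul]⟩
  exact LinearMap.funLeft_injective_of_surjective _ _ _ (hC.cellIndex_surjective hconn)
    (h.trans (map_zero _).symm)

end CompletelyRegular

section QPolynomial
variable [Fintype V] [DecidableEq V] {G : SimpleGraph V} [DecidableRel G.Adj] {D : ℕ}
  {θ : Fin (D + 1) → ℝ} {E : Fin (D + 1) → Matrix V V ℂ}

lemma PrimIdem.one_mem_eigenspacesUpTo {k : ℕ} (hPI : PrimIdem (G.adjMatrix ℂ) D θ E)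
    (hreg : ∀ v, G.degree v = k) (hθ0 : θ 0 = k) (n : ℕ) : 1 ∈ eigenspacesUpTo E n := by
  refine mem_eigenspacesUpTo.2 fun l hl => ?_
  refine hPI.mulVec_eq_zero_of_mulVec_eq_smul (G.isHermitian_adjMatrix ℂ) (μ := θ 0) ?_
    (Complex.ofReal_injective.ne (hPI.1.ne (by rintro rfl; simp at hl)))
  ext v
  simp [hreg v, hθ0]

variable {C : Finset V} {ρ : ℕ} {γ α β : ℕ → ℕ}

lemma IsCRC.mulVec_cellLift_eq_zero (hC : IsCRC G C ρ γ α β) (hconn : G.Connected)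
    (hPI : PrimIdem (G.adjMatrix ℂ) D θ E) {idx : Fin (ρ + 1) → Fin (D + 1)}
    (hidx : Function.Injective idx)
    (hspec : spectrum ℂ (quotientMatrix ℂ γ α β ρ) = Set.range fun j => (θ (idx j) : ℂ))
    {l : Fin (D + 1)} (hl : l ∉ Set.range idx) (w : Fin (ρ + 1) → ℂ) :
    E l *ᵥ cellLift G C ρ ℂ w = 0 := by
  obtain ⟨v, hv, hspan⟩ := exists_eigenvectors_span_eq_top (U := quotientMatrix ℂ γ α β ρ)
    (Complex.ofReal_injective.comp (hPI.1.comp hidx)) fun r => hspec ▸ ⟨r, rfl⟩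
  have h : (E l).mulVecLin ∘ₗ cellLift G C ρ ℂ = 0 := LinearMap.ext_on_range hspan fun r => by
    refine hPI.mulVec_eq_zero_of_mulVec_eq_smul (G.isHermitian_adjMatrix ℂ) ?_
      (Complex.ofReal_injective.ne (hPI.1.ne fun h => hl ⟨r, h.symm⟩))
    rw [hC.adjMatrix_mulVec_cellLift hconn, hv, map_smul]
    rfl
  exact LinearMap.congr_fun h w

end QPolynomial

theorem stmt7_general {V : Type*} [Fintype V] [DecidableEq V]
    (G : SimpleGraph V) [DecidableRel G.Adj] (k D : ℕ) (b c : ℕ → ℕ)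
    (hG : IsDRG G k D b c)
    (θ : Fin (D + 1) → ℝ) (hθ0 : θ 0 = k)
    (E : Fin (D + 1) → Matrix V V ℂ) (hPI : PrimIdem (G.adjMatrix ℂ) D θ E)
    (q : Fin (D + 1) → Fin (D + 1) → Fin (D + 1) → ℝ)
    (hq : KreinRel D E q) (hQ : QPolyKrein D q)
    (C : Finset V) (ρ : ℕ) (γ α β : ℕ → ℕ)
    (hC : IsCRC G C ρ γ α β)
    (idx : Fin (ρ + 1) → Fin (D + 1)) (hidxmono : StrictMono idx)
    (hspec : spectrum ℂ (quotientMatrix ℂ γ α β ρ) =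
      Set.range fun j => (θ (idx j) : ℂ))
    (u : Fin (ρ + 1) → ℝ)
    (hu : quotientMatrix ℝ γ α β ρ *ᵥ u = θ (idx 1) • u)
    (huinj : Function.Injective u) :
    ∀ j : Fin ρ, (idx j.succ : ℕ) - (idx j.castSucc : ℕ) ≤ (idx 1 : ℕ) := by
  intro j
  by_contra! hgap
  have hA := G.isHermitian_adjMatrix ℂ
  set n := (idx j.castSucc : ℕ)
  set x := cellLift G C ρ ℂ (Complex.ofRealHom ∘ u)
  have hx : E (idx 1) *ᵥ x = x := hPI.mulVec_eq_self_of_mulVec_eq_smul hA <| by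
    rw [hC.adjMatrix_mulVec_cellLift hG.1, quotientMatrix_mulVec_map _ hu, map_smul]; rfl
  have hpow : ∀ p : ℕ, x ^ p ∈ eigenspacesUpTo E n :=
    hPI.pow_mem_eigenspacesUpTo hA hq hQ hx (hPI.one_mem_eigenspacesUpTo hG.2.1 hθ0 n)
      fun p l hl hle => by
        rw [← cellLift_pow]
        exact hC.mulVec_cellLift_eq_zero hG.1 hPI hidxmono.injective hspec
          (hidxmono.notMem_range_of_lt_of_lt_succ hl (by simp only [Fin.lt_def]; omega)) _
  have hall : ⊤ ≤ (eigenspacesUpTo E n).comap (cellLift G C ρ ℂ) := by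
    rw [← span_range_pow_eq_top (Complex.ofReal_injective.comp huinj), Submodule.span_le]
    rintro _ ⟨p, rfl⟩
    exact hpow p
  obtain ⟨w, hw0, hw⟩ := hC.exists_cellLift_eigenvector hG.1 (μ := θ (idx j.succ))
    (by rw [hspec]; exact ⟨j.succ, rfl⟩)
  refine hw0 ?_
  rw [← hPI.mulVec_eq_self_of_mulVec_eq_smul hA hw]
  exact mem_eigenspacesUpTo.1 (hall Submodule.mem_top) _ (hidxmono Fin.castSucc_lt_succ)

theorem stmt7 {V : Type*} [Fintype V] [DecidableEq V]
    (G : SimpleGraph V) [DecidableRel G.Adj] (k D : ℕ) (b c : ℕ → ℕ)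
    (hG : IsDRG G k D b c)
    (θ : Fin (D + 1) → ℝ) (hθ0 : θ 0 = k)
    (E : Fin (D + 1) → Matrix V V ℂ) (hPI : PrimIdem (G.adjMatrix ℂ) D θ E)
    (q : Fin (D + 1) → Fin (D + 1) → Fin (D + 1) → ℝ)
    (hq : KreinRel D E q) (hQ : QPolyKrein D q)
    (C : Finset V) (ρ : ℕ) (γ α β : ℕ → ℕ)
    (hC : IsCRC G C ρ γ α β)
    (idx : Fin (ρ + 1) → Fin (D + 1)) (hidx0 : idx 0 = 0) (hidxmono : StrictMono idx)
    (hspec : spectrum ℂ (quotientMatrix ℂ γ α β ρ) =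
      Set.range fun j => (θ (idx j) : ℂ))
    (u : Fin (ρ + 1) → ℝ)
    (hu : quotientMatrix ℝ γ α β ρ *ᵥ u = θ (idx 1) • u) (hu0 : u 0 = 1)
    (huinj : Function.Injective u) :
    ∀ j : Fin ρ, (idx j.succ : ℕ) - (idx j.castSucc : ℕ) ≤ (idx 1 : ℕ) :=
  stmt7_general G k D b c hG θ hθ0 E hPI q hq hQ C ρ γ α β hC idx hidxmono hspec u hu huinj
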